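/- arXiv:1701.01707 — 9 statements merged into one kernel-verified Lean document; each statement's English description precedes it below -/
import Mathlib

section
/- Let A ⊆ I_m and B = ⋃_{i_1,…,i_l ∈ A} supp(P_{i_1…i_l,•}). Then a PSO 𝔅 maps the relative interior of the facet Γ_A into the relative interior of the facet Γ_B. -/
noncomputable def PSO (m l : ℕ) (P : (Fin l → Fin m) → Fin m → ℝ)
    (x : Fin m → ℝ) : Fin m → ℝ :=
  fun k => ∑ i : Fin l → Fin m, (∏ s, x (i s)) * P i k

def supp {m : ℕ} (x : Fin m → ℝ) : Set (Fin m) := {k | x k ≠ 0}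

/-- The relative interior of the facet `Γ_A` of the simplex:
points of the simplex whose support is exactly `A`. -/
def intGamma (m : ℕ) (A : Set (Fin m)) : Set (Fin m → ℝ) :=
  {x ∈ stdSimplex ℝ (Fin m) | supp x = A}

/-- Proposition 2.4 (iii): `𝔅(int Γ_A) ⊆ int Γ_B` where
`B = ⋃_{i₁,…,i_l ∈ A} supp P_{i₁…i_l,•}`. -/
theorem PSO_maps_intGamma (m l : ℕ) (P : (Fin l → Fin m) → Fin m → ℝ)
    (hP : ∀ i, P i ∈ stdSimplex ℝ (Fin m)) (A : Set (Fin m)) :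
    Set.MapsTo (PSO m l P) (intGamma m A)
      (intGamma m (⋃ i ∈ {i : Fin l → Fin m | ∀ s, i s ∈ A}, supp (P i))) := by
  rintro x ⟨⟨hx0, hx1⟩, hxA⟩
  have hxmem : ∀ k, x k ≠ 0 ↔ k ∈ A := fun k => by
    rw [← hxA]; exact Iff.rfl
  have hterm_nonneg : ∀ (i : Fin l → Fin m) (k : Fin m),
      0 ≤ (∏ s, x (i s)) * P i k := fun i k =>
    mul_nonneg (Finset.prod_nonneg fun s _ => hx0 _) ((hP i).1 k)
  have hprod_ne : ∀ (i : Fin l → Fin m),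
      (∏ s, x (i s)) ≠ 0 ↔ ∀ s, i s ∈ A := by
    intro i
    rw [Finset.prod_ne_zero_iff]
    constructor
    · intro h s; exact (hxmem _).1 (h s (Finset.mem_univ s))
    · intro h s _; exact (hxmem _).2 (h s)
  constructor
  · constructor
    · intro k
      exact Finset.sum_nonneg fun i _ => hterm_nonneg i k
    · -- sum over k equals 1
      have : ∑ k, PSO m l P x k
          = ∑ i : Fin l → Fin m, ∏ s, x (i s) := by
        simp only [PSO]
        rw [Finset.sum_comm]
        refine Finset.sum_congr rfl fun i _ => ?_
        rw [← Finset.mul_sum, (hP i).2, mul_one]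
      rw [this, ← Fintype.piFinset_univ,
        ← Finset.prod_univ_sum (fun _ => Finset.univ) (fun _ j => x j)]
      simp [hx1]
  · ext k
    simp only [supp, Set.mem_setOf_eq, Set.mem_iUnion]
    rw [show PSO m l P x k = ∑ i : Fin l → Fin m, (∏ s, x (i s)) * P i k from rfl]
    rw [← not_iff_not]
    push_neg
    rw [Finset.sum_eq_zero_iff_of_nonneg fun i _ => hterm_nonneg i k]
    constructor
    · intro h i hi
      have := h i (Finset.mem_univ i)
      rcases mul_eq_zero.1 this with h1 | h2
      · exact absurd hi ((not_iff_not.2 (hprod_ne i)).1 (not_not.2 h1)).elim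
      · exact h2
    · intro h i _
      by_cases hi : ∀ s, i s ∈ A
      · rw [h i hi, mul_zero]
      · rw [(not_iff_not.2 (hprod_ne i)).2 hi |> not_not.1, zero_mul]
end

section
/- For a PSO 𝔅 and subsets A, B ⊆ I_m, 𝔅(int Γ_A) ⊆ int Γ_B if and only if 𝔅(x⁰) ∈ int Γ_B for some x⁰ ∈ int Γ_A. -/
/-! Since every term of `𝔅(x)_k` is nonnegative, `𝔅(x)_k ≠ 0` iff some term is nonzero, i.e. iff
`P_{i,k} ≠ 0` for some multi-index `i` with all entries in `supp x`. Hence `supp 𝔅(x)` depends only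
on `supp x`: as `𝔅` preserves the simplex, one point of `int Γ_A` landing in `int Γ_B` forces all
of them to. -/

section PSO

variable {m l : ℕ} {P : (Fin l → Fin m) → Fin m → ℝ}

lemma PSO_mem_stdSimplex (hP : ∀ i, P i ∈ stdSimplex ℝ (Fin m)) {x : Fin m → ℝ}
    (hx : x ∈ stdSimplex ℝ (Fin m)) : PSO m l P x ∈ stdSimplex ℝ (Fin m) := by
  refine ⟨fun k => Finset.sum_nonneg fun i _ =>
    mul_nonneg (Finset.prod_nonneg fun s _ => hx.1 _) ((hP i).1 k), ?_⟩
  calc ∑ k, PSO m l P x k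
      = ∑ i : Fin l → Fin m, (∏ s, x (i s)) * ∑ k, P i k := by
        simp only [PSO, Finset.mul_sum]; exact Finset.sum_comm
    _ = (∑ k, x k) ^ l := by simp only [(hP _).2, mul_one, Fintype.sum_pow]
    _ = 1 := by rw [hx.2, one_pow]

lemma supp_PSO (hP : ∀ i k, 0 ≤ P i k) {x : Fin m → ℝ} (hx : 0 ≤ x) :
    supp (PSO m l P x) = {k | ∃ i : Fin l → Fin m, (∀ s, i s ∈ supp x) ∧ P i k ≠ 0} := by
  ext k
  have hterm : ∀ i ∈ Finset.univ, 0 ≤ (∏ s, x (i s)) * P i k := fun i _ =>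
    mul_nonneg (Finset.prod_nonneg fun s _ => hx _) (hP i k)
  simp only [supp, PSO, Set.mem_ofPred_eq, ne_eq, Finset.sum_eq_zero_iff_of_nonneg hterm,
    Finset.mem_univ, true_imp_iff, mul_eq_zero, Finset.prod_eq_zero_iff, true_and, not_forall,
    not_or, not_exists]

lemma supp_PSO_congr (hP : ∀ i k, 0 ≤ P i k) {x y : Fin m → ℝ} (hx : 0 ≤ x) (hy : 0 ≤ y)
    (hxy : supp x = supp y) : supp (PSO m l P x) = supp (PSO m l P y) := by
  rw [supp_PSO hP hx, supp_PSO hP hy, hxy]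

end PSO

lemma intGamma_nonempty {m : ℕ} {A : Set (Fin m)} (hA : A.Nonempty) :
    (intGamma m A).Nonempty := by
  classical
  have hcard : (A.toFinset.card : ℝ) ≠ 0 :=
    Nat.cast_ne_zero.2 (Finset.card_pos.2 (Set.toFinset_nonempty.2 hA)).ne'
  refine ⟨fun k => if k ∈ A then (A.toFinset.card : ℝ)⁻¹ else 0, ⟨fun k => ?_, ?_⟩, ?_⟩
  · dsimp only
    split_ifs <;> positivity
  · rw [Finset.sum_ite, Finset.sum_const_zero, add_zero, Finset.sum_const, nsmul_eq_mul,
      Set.filter_mem_univ_eq_toFinset, mul_inv_cancel₀ hcard]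
  · ext k
    simp only [supp, Set.mem_ofPred_eq, ne_eq, ite_eq_right_iff, inv_eq_zero, hcard, imp_false,
      not_not]

/-- Proposition 2.4 (iv): `𝔅(int Γ_A) ⊆ int Γ_B` iff `𝔅(x⁰) ∈ int Γ_B`
for some `x⁰ ∈ int Γ_A`. -/
theorem PSO_mapsTo_iff_exists (m l : ℕ) (P : (Fin l → Fin m) → Fin m → ℝ)
    (hP : ∀ i, P i ∈ stdSimplex ℝ (Fin m)) (A B : Set (Fin m)) (hA : A.Nonempty) :
    Set.MapsTo (PSO m l P) (intGamma m A) (intGamma m B) ↔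
      ∃ x₀ ∈ intGamma m A, PSO m l P x₀ ∈ intGamma m B := by
  constructor
  · intro h
    obtain ⟨x₀, hx₀⟩ := intGamma_nonempty hA
    exact ⟨x₀, hx₀, h hx₀⟩
  · rintro ⟨x₀, ⟨hx₀, hx₀A⟩, -, hB⟩ x ⟨hx, hxA⟩
    refine ⟨PSO_mem_stdSimplex hP hx, ?_⟩
    rw [← hB]
    exact supp_PSO_congr (fun i => (hP i).1) hx.1 hx₀.1 (hxA.trans hx₀A.symm)
end

section
/- For a PSO 𝔅 and a subset A ⊆ I_m, the following are equivalent: (i) A is absorbing, i.e. A^c = ⋂_{i_1,…,i_l ∈ A} null(P_{i_1…i_l,•}); (ii) 𝔅(int Γ_A) ⊆ int Γ_A; (iii) 𝔅(x⁰) ∈ int Γ_A for some x⁰ ∈ int Γ_A. -/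
def nullSet {m : ℕ} (x : Fin m → ℝ) : Set (Fin m) := {k | x k = 0}

/-- `A ⊆ I_m` is absorbing if `Aᶜ = ⋂_{i₁,…,i_l ∈ A} null P_{i₁…i_l,•}`. -/
def Absorbing (m l : ℕ) (P : (Fin l → Fin m) → Fin m → ℝ) (A : Set (Fin m)) : Prop :=
  Aᶜ = ⋂ i ∈ {i : Fin l → Fin m | ∀ s, i s ∈ A}, nullSet (P i)

lemma pso_mem_stdSimplex (m l : ℕ) (P : (Fin l → Fin m) → Fin m → ℝ)
    (hP : ∀ i, P i ∈ stdSimplex ℝ (Fin m)) {x : Fin m → ℝ}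
    (hx : x ∈ stdSimplex ℝ (Fin m)) : PSO m l P x ∈ stdSimplex ℝ (Fin m) := by
  constructor
  · intro k
    exact Finset.sum_nonneg fun i _ =>
      mul_nonneg (Finset.prod_nonneg fun s _ => hx.1 _) ((hP i).1 k)
  · calc ∑ k, PSO m l P x k
        = ∑ i : Fin l → Fin m, ∑ k, (∏ s, x (i s)) * P i k := Finset.sum_comm
      _ = ∑ i : Fin l → Fin m, (∏ s, x (i s)) := by
          refine Finset.sum_congr rfl fun i _ => ?_
          rw [← Finset.mul_sum, (hP i).2, mul_one]
      _ = (∑ k, x k) ^ l := (Fintype.sum_pow x l).symm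
      _ = 1 := by rw [hx.2, one_pow]

lemma supp_pso (m l : ℕ) (P : (Fin l → Fin m) → Fin m → ℝ)
    (hP : ∀ i, P i ∈ stdSimplex ℝ (Fin m)) (A : Set (Fin m)) {x : Fin m → ℝ}
    (hx : x ∈ intGamma m A) :
    supp (PSO m l P x) =
      (⋂ i ∈ {i : Fin l → Fin m | ∀ s, i s ∈ A}, nullSet (P i))ᶜ := by
  obtain ⟨hxs, hsupp⟩ := hx
  have hmem : ∀ k : Fin m, k ∈ A ↔ x k ≠ 0 := by
    intro k; rw [← hsupp]; rfl
  ext k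
  have key : PSO m l P x k = 0 ↔
      ∀ i : Fin l → Fin m, (∀ s, i s ∈ A) → P i k = 0 := by
    rw [PSO, Finset.sum_eq_zero_iff_of_nonneg fun i _ =>
      mul_nonneg (Finset.prod_nonneg fun s _ => hxs.1 _) ((hP i).1 k)]
    constructor
    · intro h i hi
      have := h i (Finset.mem_univ i)
      rcases mul_eq_zero.1 this with h0 | h0
      · exfalso
        obtain ⟨s, -, hs⟩ := Finset.prod_eq_zero_iff.1 h0
        exact (hmem (i s)).1 (hi s) hs
      · exact h0
    · intro h i _
      by_cases hi : ∀ s, i s ∈ A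
      · rw [h i hi, mul_zero]
      · push_neg at hi
        obtain ⟨s, hs⟩ := hi
        have : x (i s) = 0 := by
          by_contra hc; exact hs ((hmem (i s)).2 hc)
        rw [Finset.prod_eq_zero (Finset.mem_univ s) this, zero_mul]
  simp only [supp, Set.mem_setOf_eq, Set.mem_compl_iff, Set.mem_iInter, nullSet]
  exact not_congr key

lemma exists_intGamma (m : ℕ) (A : Set (Fin m)) (hA : A.Nonempty) :
    ∃ x₀, x₀ ∈ intGamma m A := by
  classical
  have hcard : (0 : ℝ) < (A.toFinset.card : ℝ) := by
    have : A.toFinset.Nonempty := by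
      obtain ⟨a, ha⟩ := hA
      exact ⟨a, Set.mem_toFinset.2 ha⟩
    exact_mod_cast Finset.card_pos.2 this
  refine ⟨fun k => if k ∈ A then (A.toFinset.card : ℝ)⁻¹ else 0, ⟨?_, ?_⟩, ?_⟩
  · intro k
    by_cases h : k ∈ A <;> simp [h, le_of_lt (inv_pos.2 hcard)]
  · show ∑ k : Fin m, (if k ∈ A then (A.toFinset.card : ℝ)⁻¹ else 0) = 1
    rw [← Finset.sum_filter, show Finset.univ.filter (fun k => k ∈ A) = A.toFinset by
      ext k; simp [Set.mem_toFinset]]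
    rw [Finset.sum_const, nsmul_eq_mul, mul_inv_cancel₀ (ne_of_gt hcard)]
  · ext k
    simp only [supp, Set.mem_setOf_eq, ite_ne_right_iff]
    exact and_iff_left (inv_pos.2 hcard).ne'

/-- Proposition 2.5: for a subset `A ⊆ I_m` the following are equivalent:
(i) `A` is absorbing; (ii) `𝔅(int Γ_A) ⊆ int Γ_A`;
(iii) `𝔅(x⁰) ∈ int Γ_A` for some `x⁰ ∈ int Γ_A`. -/
theorem absorbing_iff (m l : ℕ) (P : (Fin l → Fin m) → Fin m → ℝ)
    (hP : ∀ i, P i ∈ stdSimplex ℝ (Fin m)) (A : Set (Fin m)) (hA : A.Nonempty) :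
    (Absorbing m l P A ↔
        Set.MapsTo (PSO m l P) (intGamma m A) (intGamma m A)) ∧
      (Set.MapsTo (PSO m l P) (intGamma m A) (intGamma m A) ↔
        ∃ x₀ ∈ intGamma m A, PSO m l P x₀ ∈ intGamma m A) := by
  obtain ⟨x₀, hx₀⟩ := exists_intGamma m A hA
  have key : ∀ x ∈ intGamma m A, (PSO m l P x ∈ intGamma m A ↔ Absorbing m l P A) := by
    intro x hx
    constructor
    · intro h
      have := h.2
      rw [supp_pso m l P hP A hx] at this
      rw [Absorbing]
      exact compl_eq_comm.mp this
    · intro h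
      refine ⟨pso_mem_stdSimplex m l P hP hx.1, ?_⟩
      rw [supp_pso m l P hP A hx, ← h, compl_compl]
  constructor
  · constructor
    · intro habs x hx
      exact (key x hx).2 habs
    · intro hmaps
      exact (key x₀ hx₀).1 (hmaps hx₀)
  · constructor
    · intro hmaps
      exact ⟨x₀, hx₀, hmaps hx₀⟩
    · rintro ⟨y, hy, hpy⟩ x hx
      exact (key x hx).2 ((key y hy).1 hpy)
end

section
/- If every subset A ⊆ I_m with |A| ≤ l is absorbing for a PSO of order l, then every subset of I_m is absorbing. -/
section Absorbing

variable {m l : ℕ} {P : (Fin l → Fin m) → Fin m → ℝ}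

theorem Absorbing.apply_eq_zero {A : Set (Fin m)} (hA : Absorbing m l P A)
    {i : Fin l → Fin m} (hi : ∀ s, i s ∈ A) {k : Fin m} (hk : k ∉ A) : P i k = 0 := by
  have hk' : k ∈ Aᶜ := hk
  rw [hA] at hk'
  exact Set.mem_iInter₂.mp hk' i hi

theorem Absorbing.exists_apply_ne_zero {A : Set (Fin m)} (hA : Absorbing m l P A)
    {k : Fin m} (hk : k ∈ A) : ∃ i : Fin l → Fin m, (∀ s, i s ∈ A) ∧ P i k ≠ 0 := by
  have hk' : k ∉ Aᶜ := not_not_intro hk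
  rw [hA] at hk'
  simpa [nullSet] using hk'

theorem absorbing_of_absorbing_range_of_forall_mem {B : Set (Fin m)}
    (hrange : ∀ i : Fin l → Fin m, (∀ s, i s ∈ B) → Absorbing m l P (Set.range i))
    (hcover : ∀ k ∈ B, ∃ A ⊆ B, k ∈ A ∧ Absorbing m l P A) : Absorbing m l P B := by
  ext k
  simp only [Set.mem_compl_iff, Set.mem_iInter, Set.mem_ofPred_eq, nullSet]
  constructor
  · intro hk i hi
    exact (hrange i hi).apply_eq_zero Set.mem_range_self fun ⟨s, hs⟩ => hk (hs ▸ hi s)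
  · intro h hkB
    obtain ⟨A, hAB, hkA, hA⟩ := hcover k hkB
    obtain ⟨i, hi, hne⟩ := hA.exists_apply_ne_zero hkA
    exact hne (h i fun s => hAB (hi s))

end Absorbing

theorem not_absorbing_empty_of_order_zero {m : ℕ} {P : (Fin 0 → Fin m) → Fin m → ℝ}
    (hP : ∀ i, P i ∈ stdSimplex ℝ (Fin m)) : ¬ Absorbing m 0 P ∅ := by
  intro h
  have hzero : ∀ k, P Fin.elim0 k = 0 := fun k =>
    h.apply_eq_zero (fun s => s.elim0) (Set.notMem_empty k)
  have hsum := (hP Fin.elim0).2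
  simp [hzero] at hsum

theorem all_absorbing_of_small_absorbing_general (m l : ℕ)
    (P : (Fin l → Fin m) → Fin m → ℝ)
    (hP : ∀ i, P i ∈ stdSimplex ℝ (Fin m))
    (hsmall : ∀ A : Finset (Fin m), A.card ≤ l → Absorbing m l P ↑A) :
    ∀ B : Set (Fin m), Absorbing m l P B := by
  intro B
  refine absorbing_of_absorbing_range_of_forall_mem (fun i _ => ?_) (fun k hk => ?_)
  · simpa using hsmall (Finset.univ.image i) (Finset.card_image_le.trans (by simp))
  · rcases Nat.eq_zero_or_pos l with rfl | hl
    · exact absurd (by simpa using hsmall ∅ le_rfl) (not_absorbing_empty_of_order_zero hP)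
    · exact ⟨{k}, by simpa using hk, rfl, by simpa using hsmall {k} hl⟩

/-- Proposition 3.1: if every subset `A ⊆ I_m` with `|A| ≤ l` is absorbing,
then every subset of `I_m` is absorbing. -/
theorem all_absorbing_of_small_absorbing (m l : ℕ)
    (P : (Fin l → Fin m) → Fin m → ℝ)
    (hP : ∀ i, P i ∈ stdSimplex ℝ (Fin m))
    (hsym : ∀ (i : Fin l → Fin m) (π : Equiv.Perm (Fin l)), P (i ∘ π) = P i)
    (hsmall : ∀ A : Finset (Fin m), A.card ≤ l → Absorbing m l P ↑A) :
    ∀ B : Set (Fin m), Absorbing m l P B :=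
  all_absorbing_of_small_absorbing_general m l P hP hsmall
end

section
/- If a PSO 𝔅 is orthogonal preserving and fixes every vertex (𝔅(e_i) = e_i for all i), then P_{i_1…i_l,n} = 0 whenever n ∉ {i_1,…,i_l}. -/
/-- `𝔅` is orthogonal preserving on the simplex. -/
def OrthPreserving (m : ℕ) (B : (Fin m → ℝ) → (Fin m → ℝ)) : Prop :=
  ∀ x ∈ stdSimplex ℝ (Fin m), ∀ y ∈ stdSimplex ℝ (Fin m),
    supp x ∩ supp y = ∅ → supp (B x) ∩ supp (B y) = ∅

/-- If a PSO (with `m ≥ 2`) is orthogonal preserving and fixes every vertex,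
then `P_{i₁…i_l,n} = 0` whenever `n ∉ {i₁,…,i_l}`. -/
theorem coeff_zero_of_orthPreserving (m l : ℕ) (hm : 2 ≤ m)
    (P : (Fin l → Fin m) → Fin m → ℝ)
    (hP : ∀ i, P i ∈ stdSimplex ℝ (Fin m))
    (hsym : ∀ (i : Fin l → Fin m) (π : Equiv.Perm (Fin l)), P (i ∘ π) = P i)
    (hfix : ∀ i : Fin m, PSO m l P (Pi.single i 1) = Pi.single i 1)
    (hOP : OrthPreserving m (PSO m l P)) :
    ∀ (i : Fin l → Fin m) (n : Fin m), (∀ s, i s ≠ n) → P i n = 0 := by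
  intro i n hn
  have hm1 : (0:ℝ) < (m:ℝ) - 1 := by
    have : (2:ℝ) ≤ (m:ℝ) := by exact_mod_cast hm
    linarith
  set c : ℝ := ((m:ℝ) - 1)⁻¹ with hc
  have hcpos : 0 < c := inv_pos.2 hm1
  set x : Fin m → ℝ := fun k => if k = n then 0 else c with hx
  have hxmem : x ∈ stdSimplex ℝ (Fin m) := by
    constructor
    · intro k; by_cases h : k = n <;> simp [hx, h, hcpos.le]
    · calc ∑ k : Fin m, x k = ∑ k : Fin m, (c - if k = n then c else 0) := by
            apply Finset.sum_congr rfl; intro k _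
            by_cases h : k = n <;> simp [hx, h]
        _ = (m : ℝ) * c - c := by
            rw [Finset.sum_sub_distrib, Finset.sum_const, Finset.sum_ite_eq']
            simp [mul_comm]
        _ = 1 := by
            rw [hc]; field_simp
  have henmem : Pi.single n (1:ℝ) ∈ stdSimplex ℝ (Fin m) := by
    constructor
    · intro k; by_cases h : k = n <;> simp [Pi.single_apply, h]
    · simp [Pi.single_apply]
  have hdis : supp x ∩ supp (Pi.single n (1:ℝ)) = ∅ := by
    ext k
    by_cases h : k = n <;> simp [supp, hx, Pi.single_apply, h]
  have h0 := hOP x hxmem (Pi.single n 1) henmem hdis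
  rw [hfix n] at h0
  have hBn : PSO m l P x n = 0 := by
    by_contra h
    have hmem : n ∈ supp (PSO m l P x) ∩ supp (Pi.single n (1:ℝ)) :=
      ⟨h, by simp [supp]⟩
    rw [h0] at hmem
    exact hmem
  have hxnonneg : ∀ k, 0 ≤ x k := by
    intro k; by_cases h : k = n <;> simp [hx, h, hcpos.le]
  have hterms : ∀ j ∈ (Finset.univ : Finset (Fin l → Fin m)),
      0 ≤ (∏ s, x (j s)) * P j n := by
    intro j _
    exact mul_nonneg (Finset.prod_nonneg fun s _ => hxnonneg _) ((hP j).1 n)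
  have hsum : ∑ j : Fin l → Fin m, (∏ s, x (j s)) * P j n = 0 := hBn
  have hzero := (Finset.sum_eq_zero_iff_of_nonneg hterms).mp hsum i (Finset.mem_univ i)
  have hprod : 0 < ∏ s, x (i s) :=
    Finset.prod_pos fun s _ => by simp [hx, hn s, hcpos]
  rcases mul_eq_zero.mp hzero with h | h
  · exact absurd h (ne_of_gt hprod)
  · exact h
end

section
/- If a PSO 𝔅 is orthogonal preserving and fixes every vertex of the simplex, then 𝔅 is surjective. -/
/-!
Since `x ⊥ e_k` whenever `x_k = 0`, an orthogonality preserving `𝔅` fixing the vertices has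
`(𝔅 x)_k = 0` whenever `x_k = 0`: the continuous self-map `𝔅` of the simplex maps every face into
itself, and such a map is onto. Given `y` in the simplex, label each point `v` of a grid of mesh
`1 / N` by a coordinate `k` with `v_k > 0` and `y_k ≤ (𝔅 v)_k`; one exists because `𝔅 v` and `y`
both sum to `1` and `𝔅 v` vanishes off the support of `v`. This is a Sperner labelling, so a cell
of the Kuhn triangulation is fully labelled, and by uniform continuity `𝔅` nearly overshoots `y`
in every coordinate at its base point. Hence `max_k (y_k - (𝔅 x)_k)` has minimum `≤ 0` on the
simplex, and at a minimiser `y ≤ 𝔅 x`, which forces `𝔅 x = y` as both sum to `1`.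

Sperner's lemma is the door-to-door parity argument: in dimension `d + 1` a door is a facet
labelled `0, …, d`; a fully labelled cell has one door, any other cell none or two. Pivoting
across a door to the neighbouring cell pairs the doors off, except the doors lying in the face
`v_{d+1} = 0`, which are the fully labelled cells of dimension `d`.
-/

open Finset

section DoorCount

variable {α : Type*} [DecidableEq α] {s : Finset α} {d : ℕ} {f : α → ℕ}

lemma Finset.image_erase_eq_range_of_range_subset (hs : #s = d + 1) {i : α} (hi : i ∈ s)
    (h : range d ⊆ (s.erase i).image f) :
    (s.erase i).image f = range d ∧ Set.InjOn f (s.erase i) := by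
  have hcard : #(s.erase i) = d := by rw [card_erase_of_mem hi, hs, Nat.add_sub_cancel]
  have himage : (s.erase i).image f = range d :=
    (eq_of_subset_of_card_le h (by rw [card_range, ← hcard]; exact card_image_le)).symm
  exact ⟨himage, card_image_iff.mp (by rw [himage, card_range, hcard])⟩

lemma Finset.card_filter_range_subset_image_erase_eq_one (hs : #s = d + 1)
    (hfull : range (d + 1) ⊆ s.image f) : #{i ∈ s | range d ⊆ (s.erase i).image f} = 1 := by
  have himage : s.image f = range (d + 1) :=
    (eq_of_subset_of_card_le hfull (by rw [card_range, ← hs]; exact card_image_le)).symm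
  have hinj : Set.InjOn f s := card_image_iff.mp (by rw [himage, card_range, hs])
  obtain ⟨a, ha, had⟩ := mem_image.mp (hfull (self_mem_range_succ d))
  refine card_eq_one.mpr ⟨a, eq_singleton_iff_unique_mem.mpr ⟨mem_filter.mpr ⟨ha, ?_⟩, ?_⟩⟩
  · intro k hk
    obtain ⟨b, hb, rfl⟩ := mem_image.mp (hfull (range_subset_range.mpr d.le_succ hk))
    exact mem_image_of_mem f (mem_erase.mpr ⟨by rintro rfl; simp [had] at hk, hb⟩)
  · intro i hi
    obtain ⟨hi, hdoor⟩ := mem_filter.mp hi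
    by_contra hia
    have hd : d ∈ (s.erase i).image f := had ▸ mem_image_of_mem f (mem_erase.mpr ⟨Ne.symm hia, ha⟩)
    rw [(image_erase_eq_range_of_range_subset hs hi hdoor).1] at hd
    simp at hd

lemma Finset.even_card_filter_range_subset_image_erase (hs : #s = d + 1)
    (hf : ∀ a ∈ s, f a ≤ d) (hfull : ¬range (d + 1) ⊆ s.image f) :
    Even #{i ∈ s | range d ⊆ (s.erase i).image f} := by
  obtain hD | ⟨i, hi⟩ := ({i ∈ s | range d ⊆ (s.erase i).image f} : Finset α).eq_empty_or_nonempty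
  · rw [hD, card_empty]
    exact Even.zero
  obtain ⟨hi, hdoor⟩ := mem_filter.mp hi
  have hfi : f i < d := by
    refine (hf i hi).lt_of_ne fun hid => hfull fun k hk => ?_
    rcases Nat.lt_succ_iff_lt_or_eq.mp (mem_range.mp hk) with hk | hk
    · exact image_subset_image (erase_subset i s) (hdoor (mem_range.mpr hk))
    · rw [hk, ← hid]
      exact mem_image_of_mem f hi
  -- the label of `i` occurs exactly once more, at `j`; the doors are `i` and `j`
  obtain ⟨j, hj, hji⟩ := mem_image.mp
    ((image_erase_eq_range_of_range_subset hs hi hdoor).1 ▸ mem_range.mpr hfi :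
      f i ∈ (s.erase i).image f)
  obtain ⟨hji', hj⟩ := mem_erase.mp hj
  have hdoors : ({i ∈ s | range d ⊆ (s.erase i).image f} : Finset α) = {i, j} := by
    ext a
    simp only [mem_filter, mem_insert, mem_singleton]
    constructor
    · rintro ⟨ha, hadoor⟩
      by_contra! h
      exact hji' ((image_erase_eq_range_of_range_subset hs ha hadoor).2
        (mem_erase.mpr ⟨h.2.symm, hj⟩) (mem_erase.mpr ⟨h.1.symm, hi⟩) hji)
    · rintro (rfl | rfl)
      · exact ⟨hi, hdoor⟩
      refine ⟨hj, fun k hk => ?_⟩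
      obtain ⟨b, hb, rfl⟩ := mem_image.mp (hdoor hk)
      by_cases hba : b = a
      · exact mem_image.mpr ⟨i, mem_erase.mpr ⟨hji'.symm, hi⟩, by rw [hba, hji]⟩
      · exact mem_image_of_mem f (mem_erase.mpr ⟨hba, (mem_erase.mp hb).2⟩)
  rw [hdoors, card_pair hji'.symm]
  exact even_two

end DoorCount

section Simplex

variable {ι : Type*} [Fintype ι] {x y z : ι → ℝ}

lemma exists_ne_zero_and_le_of_mem_stdSimplex (hx : x ∈ stdSimplex ℝ ι) (hy : y ∈ stdSimplex ℝ ι)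
    (hz : z ∈ stdSimplex ℝ ι) (hzx : ∀ k, x k = 0 → z k = 0) : ∃ k, x k ≠ 0 ∧ y k ≤ z k := by
  by_contra! h
  obtain ⟨k, hk⟩ : ∃ k, x k ≠ 0 := by
    by_contra! h₀
    simpa [h₀] using hx.2
  have hlt : ∑ j, z j < ∑ j, y j := by
    refine sum_lt_sum (fun j _ => ?_) ⟨k, mem_univ k, h k hk⟩
    by_cases hj : x j = 0
    · exact hzx j hj ▸ hy.1 j
    · exact (h j hj).le
  rw [hz.2, hy.2] at hlt
  exact lt_irrefl _ hlt

lemma eq_of_le_of_mem_stdSimplex (hy : y ∈ stdSimplex ℝ ι) (hz : z ∈ stdSimplex ℝ ι)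
    (h : ∀ k, y k ≤ z k) : y = z :=
  funext fun k => ((sum_eq_sum_iff_of_le fun j _ => h j).mp (hy.2.trans hz.2.symm)) k (mem_univ k)

end Simplex

namespace Sperner

def move (c : ℕ) (k : ℕ) : ℤ := (if k = c + 1 then 1 else 0) - (if k = c then 1 else 0)

/-- A cell of Kuhn's triangulation of `N • Δ^d`, whose lattice points are the `v : ℕ → ℤ` with
`IsLatticePoint d N v`: vertex `i + 1` arises from vertex `i` by moving one unit from coordinate
`perm i` to `perm i + 1`, and `perm` permutes `{0, …, d - 1}` (see `Cell.IsValid`). -/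
@[ext]
structure Cell where
  base : ℕ → ℤ
  perm : ℕ → ℕ

def Cell.vertex (C : Cell) (i : ℕ) (k : ℕ) : ℤ := C.base k + ∑ t ∈ range i, move (C.perm t) k

structure IsLatticePoint (d N : ℕ) (v : ℕ → ℤ) : Prop where
  nonneg : ∀ k, 0 ≤ v k
  eq_zero_of_lt : ∀ k, d < k → v k = 0
  sum_eq : ∑ k ∈ range (d + 1), v k = N

structure IsPermBelow (d : ℕ) (σ : ℕ → ℕ) : Prop where
  bijective : Function.Bijective σ
  eq_self : ∀ t, d ≤ t → σ t = t

structure Cell.IsValid (d N : ℕ) (C : Cell) : Prop where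
  perm : IsPermBelow d C.perm
  vertex : ∀ i ≤ d, IsLatticePoint d N (C.vertex i)

def IsSpernerLabelling (d N : ℕ) (L : (ℕ → ℤ) → ℕ) : Prop :=
  ∀ v, IsLatticePoint d N v → L v ≤ d ∧ 1 ≤ v (L v)

def Cell.IsDoor (d N : ℕ) (L : (ℕ → ℤ) → ℕ) (C : Cell) (i : ℕ) : Prop :=
  C.IsValid d N ∧ i ≤ d ∧ ∀ k < d, ∃ j ≤ d, j ≠ i ∧ L (C.vertex j) = k

def Cell.IsFull (d N : ℕ) (L : (ℕ → ℤ) → ℕ) (C : Cell) : Prop :=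
  C.IsValid d N ∧ ∀ k ≤ d, ∃ j ≤ d, L (C.vertex j) = k

variable {d N : ℕ} {L : (ℕ → ℤ) → ℕ} {C : Cell}

lemma move_self (c : ℕ) : move c c = -1 := by simp [move]

lemma move_succ (c : ℕ) : move c (c + 1) = 1 := by simp [move]

lemma move_of_ne {c k : ℕ} (h₁ : k ≠ c) (h₂ : k ≠ c + 1) : move c k = 0 := by
  simp [move, h₁, h₂]

lemma sum_range_move {c d : ℕ} (hc : c < d) : ∑ k ∈ range (d + 1), move c k = 0 := by
  simp only [move, sum_sub_distrib, sum_ite_eq', mem_range]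
  simp [hc, hc.trans (Nat.lt_succ_self d)]

namespace IsPermBelow

variable {σ : ℕ → ℕ}

lemma injective (h : IsPermBelow d σ) : σ.Injective := h.bijective.1

lemma lt (h : IsPermBelow d σ) {t : ℕ} (ht : t < d) : σ t < d := by
  by_contra! hge
  have := h.injective (h.eq_self _ hge)
  omega

lemma exists_lt_eq (h : IsPermBelow d σ) {c : ℕ} (hc : c < d) : ∃ t < d, σ t = c := by
  obtain ⟨t, rfl⟩ := h.bijective.2 c
  refine ⟨t, ?_, rfl⟩
  by_contra! hge
  rw [h.eq_self t hge] at hc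
  omega

lemma comp (h : IsPermBelow d σ) {τ : ℕ → ℕ} (hτ : IsPermBelow d τ) : IsPermBelow d (σ ∘ τ) :=
  ⟨h.bijective.comp hτ.bijective, fun t ht => by simp [hτ.eq_self t ht, h.eq_self t ht]⟩

end IsPermBelow

lemma sum_range_ite_eq_of_injective {g : ℕ → ℕ} (hg : g.Injective) (j c : ℕ) :
    ∑ t ∈ range j, (if c = g t then (1 : ℤ) else 0) = if ∃ t < j, g t = c then 1 else 0 := by
  split_ifs with h
  · obtain ⟨t₀, ht₀, rfl⟩ := h
    rw [sum_eq_single t₀ (fun t _ ht => if_neg fun e => ht (hg e).symm) (by simp [ht₀])]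
    simp
  · push Not at h
    exact sum_eq_zero fun t ht => if_neg fun e => h t (mem_range.mp ht) e.symm

lemma Cell.vertex_apply (C : Cell) (hσ : C.perm.Injective) (j k : ℕ) :
    C.vertex j k = C.base k + (if ∃ t < j, C.perm t + 1 = k then 1 else 0)
      - (if ∃ t < j, C.perm t = k then 1 else 0) := by
  have hσ' : (fun t => C.perm t + 1).Injective := fun a b h => hσ (by simpa using h)
  simp only [Cell.vertex, move, sum_sub_distrib, sum_range_ite_eq_of_injective hσ',
    sum_range_ite_eq_of_injective hσ]
  ring

lemma Cell.vertex_zero (C : Cell) : C.vertex 0 = C.base := by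
  funext k; simp [Cell.vertex]

lemma Cell.vertex_succ (C : Cell) (j k : ℕ) :
    C.vertex (j + 1) k = C.vertex j k + move (C.perm j) k := by
  simp [Cell.vertex, sum_range_succ, add_assoc]

lemma Cell.abs_vertex_sub_base_le (C : Cell) (hσ : C.perm.Injective) (j k : ℕ) :
    |C.vertex j k - C.base k| ≤ 1 := by
  rw [C.vertex_apply hσ, abs_le]
  split_ifs <;> omega

lemma IsLatticePoint.add_move {v : ℕ → ℤ} (hv : IsLatticePoint d N v) {c : ℕ}
    (hc : c < d) (hpos : 1 ≤ v c) : IsLatticePoint d N (v + move c) where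
  nonneg k := by
    rw [Pi.add_apply]
    rcases eq_or_ne k c with rfl | h₁
    · rw [move_self]; omega
    rcases eq_or_ne k (c + 1) with rfl | h₂
    · rw [move_succ]; have := hv.nonneg (c + 1); omega
    · rw [move_of_ne h₁ h₂]; have := hv.nonneg k; omega
  eq_zero_of_lt k hk := by
    rw [Pi.add_apply, move_of_ne (by omega) (by omega), hv.eq_zero_of_lt k hk, add_zero]
  sum_eq := by
    simp only [Pi.add_apply]
    rw [sum_add_distrib, hv.sum_eq, sum_range_move hc, add_zero]

lemma IsLatticePoint.sub_move {v : ℕ → ℤ} (hv : IsLatticePoint d N v) {c : ℕ}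
    (hc : c < d) (hpos : 1 ≤ v (c + 1)) : IsLatticePoint d N (v - move c) where
  nonneg k := by
    rw [Pi.sub_apply]
    rcases eq_or_ne k c with rfl | h₁
    · rw [move_self]; have := hv.nonneg k; omega
    rcases eq_or_ne k (c + 1) with rfl | h₂
    · rw [move_succ]; omega
    · rw [move_of_ne h₁ h₂]; have := hv.nonneg k; omega
  eq_zero_of_lt k hk := by
    rw [Pi.sub_apply, move_of_ne (by omega) (by omega), hv.eq_zero_of_lt k hk, sub_zero]
  sum_eq := by
    simp only [Pi.sub_apply]
    rw [sum_sub_distrib, hv.sum_eq, sum_range_move hc, sub_zero]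

def cycle (n : ℕ) : Equiv.Perm ℕ := (List.range n).formPerm

lemma cycle_apply_of_le {n t : ℕ} (ht : n ≤ t) : cycle n t = t :=
  List.formPerm_apply_of_notMem (by simpa using ht)

lemma cycle_symm_apply_of_le {n t : ℕ} (ht : n ≤ t) : (cycle n).symm t = t :=
  (cycle n).symm_apply_eq.mpr (cycle_apply_of_le ht).symm

lemma cycle_apply_of_lt {n t : ℕ} (ht : t < n) : cycle n t = (t + 1) % n := by
  have := List.formPerm_apply_getElem (List.range n) List.nodup_range t (by simpa)
  simp only [List.getElem_range] at this
  simpa [cycle] using this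

lemma cycle_succ_apply_of_lt {d t : ℕ} (ht : t < d) : cycle (d + 1) t = t + 1 := by
  rw [cycle_apply_of_lt (by omega), Nat.mod_eq_of_lt (by omega)]

lemma cycle_succ_apply_self (d : ℕ) : cycle (d + 1) d = 0 := by
  rw [cycle_apply_of_lt (by omega), Nat.mod_self]

lemma cycle_succ_symm_zero (d : ℕ) : (cycle (d + 1)).symm 0 = d :=
  (cycle (d + 1)).symm_apply_eq.mpr (cycle_succ_apply_self d).symm

namespace Cell

section

variable (C)

def rotate (n : ℕ) : Cell := ⟨C.base + move (C.perm 0), C.perm ∘ cycle n⟩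

def unrotate (n : ℕ) : Cell :=
  ⟨C.base - move (C.perm ((cycle n).symm 0)), C.perm ∘ (cycle n).symm⟩

def swap (i : ℕ) : Cell := ⟨C.base, C.perm ∘ Equiv.swap i (i + 1)⟩

lemma rotate_unrotate (n : ℕ) : (C.unrotate n).rotate n = C := by
  ext <;> simp [rotate, unrotate]

lemma unrotate_rotate (n : ℕ) : (C.rotate n).unrotate n = C := by
  ext <;> simp [rotate, unrotate]

lemma swap_swap (i : ℕ) : (C.swap i).swap i = C := by
  ext <;> simp [swap]

lemma vertex_rotate {j : ℕ} (hj : j ≤ d) : (C.rotate (d + 1)).vertex j = C.vertex (j + 1) := by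
  funext k
  have hcycle : ∀ t ∈ range j, move (C.perm (cycle (d + 1) t)) k = move (C.perm (t + 1)) k :=
    fun t ht => by rw [cycle_succ_apply_of_lt (by simp at ht; omega)]
  simp only [vertex, rotate, Pi.add_apply, Function.comp_apply, sum_congr rfl hcycle,
    sum_range_succ' _ j]
  ring

lemma vertex_rotate_succ (d : ℕ) :
    (C.rotate (d + 1)).vertex (d + 1) = C.vertex (d + 1) + move (C.perm 0) := by
  funext k
  rw [vertex_succ, C.vertex_rotate le_rfl]
  simp [rotate, cycle_succ_apply_self]

lemma vertex_unrotate {j : ℕ} (hj : j ≤ d) : (C.unrotate (d + 1)).vertex (j + 1) = C.vertex j := by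
  conv_rhs => rw [← C.rotate_unrotate (d + 1)]
  exact ((C.unrotate (d + 1)).vertex_rotate hj).symm

lemma vertex_swap_of_le {i j : ℕ} (hj : j ≤ i) : (C.swap i).vertex j = C.vertex j := by
  funext k
  refine congrArg (C.base k + ·) (sum_congr rfl fun t ht => ?_)
  rw [mem_range] at ht
  simp [swap, Equiv.swap_apply_of_ne_of_ne (by omega : t ≠ i) (by omega : t ≠ i + 1)]

lemma vertex_swap_of_lt {i j : ℕ} (hj : i + 1 < j) : (C.swap i).vertex j = C.vertex j := by
  funext k
  refine congrArg (C.base k + ·) ?_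
  refine Equiv.Perm.sum_comp (Equiv.swap i (i + 1)) _ (fun t => move (C.perm t) k) fun t ht => ?_
  have : t = i ∨ t = i + 1 := by
    by_contra! h
    exact ht (Equiv.swap_apply_of_ne_of_ne h.1 h.2)
  simp only [coe_range, Set.mem_Iio]
  omega

lemma vertex_swap_succ (i : ℕ) :
    (C.swap i).vertex (i + 1) = C.vertex i + move (C.perm (i + 1)) := by
  funext k
  rw [vertex_succ, C.vertex_swap_of_le le_rfl]
  simp [swap]

end

lemma IsValid.base (hC : C.IsValid d N) : IsLatticePoint d N C.base :=
  C.vertex_zero ▸ hC.vertex 0 (Nat.zero_le d)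

lemma IsDoor.exists_one_le_vertex (hL : IsSpernerLabelling d N L) {i : ℕ} (h : C.IsDoor d N L i)
    {k : ℕ} (hk : k < d) : ∃ j ≤ d, j ≠ i ∧ 1 ≤ C.vertex j k := by
  obtain ⟨j, hj, hji, rfl⟩ := h.2.2 k hk
  exact ⟨j, hj, hji, (hL _ (h.1.vertex j hj)).2⟩

lemma one_le_vertex_succ_perm_zero (hC : C.IsValid (d + 1) N)
    (hw : ∃ j ≤ d + 1, j ≠ 0 ∧ 1 ≤ C.vertex j 0) : 1 ≤ C.vertex (d + 1) (C.perm 0) := by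
  have hσ := hC.perm.injective
  by_cases h0 : C.perm 0 = 0
  · have hdrop : ∀ j, j ≠ 0 → C.vertex j 0 = C.base 0 - 1 := fun j hj => by
      rw [C.vertex_apply hσ, if_neg (by rintro ⟨t, -, ht⟩; omega), if_pos ⟨0, by omega, h0⟩]
      ring
    obtain ⟨j, -, hj0, hpos⟩ := hw
    rwa [h0, hdrop _ (by omega), ← hdrop j hj0]
  · generalize hc : C.perm 0 = c at h0 ⊢
    have hcd : c < d + 1 := hc ▸ hC.perm.lt (by omega)
    obtain ⟨t₁, ht₁, hσt₁⟩ := hC.perm.exists_lt_eq (show c - 1 < d + 1 by omega)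
    have h₁ := (hC.vertex 1 (by omega)).nonneg c
    rw [C.vertex_apply hσ, if_pos (show ∃ t < 1, C.perm t = c from ⟨0, by omega, hc⟩),
      if_neg (show ¬∃ t < 1, C.perm t + 1 = c by
        rintro ⟨t, ht, h⟩; rw [Nat.lt_one_iff.mp ht] at h; omega)] at h₁
    rw [C.vertex_apply hσ, if_pos (show ∃ t < d + 1, C.perm t + 1 = c from ⟨t₁, ht₁, by omega⟩),
      if_pos (show ∃ t < d + 1, C.perm t = c from ⟨0, by omega, hc⟩)]
    omega

lemma one_le_base_perm_succ (hC : C.IsValid (d + 1) N)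
    (hnb : ¬(C.perm d = d ∧ C.base (d + 1) = 0)) : 1 ≤ C.base (C.perm d + 1) := by
  have hσ := hC.perm.injective
  have hc : C.perm d < d + 1 := hC.perm.lt (by omega)
  by_cases hlast : C.perm d = d
  · have := hC.base.nonneg (d + 1)
    rw [hlast]
    omega
  · obtain ⟨t₁, ht₁, hσt₁⟩ := hC.perm.exists_lt_eq (show C.perm d + 1 < d + 1 by omega)
    have ht₁d : t₁ ≠ d := by rintro rfl; omega
    have h := (hC.vertex (t₁ + 1) ht₁).nonneg (C.perm d + 1)
    rw [C.vertex_apply hσ,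
      if_pos (show ∃ t < t₁ + 1, C.perm t = C.perm d + 1 from ⟨t₁, by omega, hσt₁⟩),
      if_neg (by rintro ⟨t, ht, h⟩; have := hσ (Nat.succ_injective h); omega)] at h
    omega

lemma one_le_vertex_perm_succ (hC : C.IsValid (d + 1) N) {i : ℕ} (hi : i < d)
    (hw : ∃ j ≤ d + 1, j ≠ i + 1 ∧ 1 ≤ C.vertex j (C.perm (i + 1))) :
    1 ≤ C.vertex i (C.perm (i + 1)) := by
  have hσ := hC.perm.injective
  generalize hc : C.perm (i + 1) = c at hw ⊢
  have hnot : ∀ t, C.perm t = c → t = i + 1 := fun t h => hσ (h.trans hc.symm)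
  have hi' := C.vertex_apply hσ i c
  rw [if_neg (show ¬∃ t < i, C.perm t = c by rintro ⟨t, ht, h⟩; have := hnot t h; omega)] at hi'
  by_cases hA : ∃ t < i, C.perm t + 1 = c
  · obtain ⟨t₀, ht₀, hσt₀⟩ := hA
    have h₂ := (hC.vertex (i + 2) (by omega)).nonneg c
    rw [C.vertex_apply hσ, if_pos (show ∃ t < i + 2, C.perm t + 1 = c from ⟨t₀, by omega, hσt₀⟩),
      if_pos (show ∃ t < i + 2, C.perm t = c from ⟨i + 1, by omega, hc⟩)] at h₂
    rw [if_pos ⟨t₀, ht₀, hσt₀⟩] at hi'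
    omega
  · rw [if_neg hA] at hi'
    obtain ⟨j, hjd, hji, hpos⟩ := hw
    rw [C.vertex_apply hσ] at hpos
    have h₀ := hC.base.nonneg c
    rcases Nat.lt_or_ge j (i + 1) with hj | hj
    · rw [if_neg (show ¬∃ t < j, C.perm t + 1 = c by
          rintro ⟨t, ht, h⟩; exact hA ⟨t, by omega, h⟩),
        if_neg (show ¬∃ t < j, C.perm t = c by rintro ⟨t, ht, h⟩; have := hnot t h; omega)] at hpos
      omega
    · rw [if_pos (show ∃ t < j, C.perm t = c from ⟨i + 1, hj.lt_of_ne hji.symm, hc⟩)] at hpos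
      split_ifs at hpos <;> omega

lemma IsValid.rotate (hC : C.IsValid (d + 1) N) (hpos : 1 ≤ C.vertex (d + 1) (C.perm 0)) :
    (C.rotate (d + 1)).IsValid (d + 1) N where
  perm := hC.perm.comp ⟨(cycle _).bijective, fun _ ht => cycle_apply_of_le ht⟩
  vertex j hj := by
    rcases hj.lt_or_eq with hj | rfl
    · rw [C.vertex_rotate (by omega)]
      exact hC.vertex _ hj
    · rw [C.vertex_rotate_succ]
      exact (hC.vertex _ le_rfl).add_move (hC.perm.lt (by omega)) hpos

lemma IsValid.unrotate (hC : C.IsValid (d + 1) N) (hpos : 1 ≤ C.base (C.perm d + 1)) :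
    (C.unrotate (d + 1)).IsValid (d + 1) N where
  perm := hC.perm.comp ⟨(cycle _).symm.bijective, fun _ ht => cycle_symm_apply_of_le ht⟩
  vertex j hj := by
    cases j with
    | zero =>
      rw [vertex_zero]
      simpa only [Cell.unrotate, Function.comp_apply, cycle_succ_symm_zero] using
        hC.base.sub_move (hC.perm.lt (by omega)) hpos
    | succ j =>
      rw [C.vertex_unrotate (by omega)]
      exact hC.vertex j (by omega)

lemma IsValid.swap (hC : C.IsValid (d + 1) N) {i : ℕ} (hi : i < d)
    (hpos : 1 ≤ C.vertex i (C.perm (i + 1))) : (C.swap i).IsValid (d + 1) N where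
  perm := hC.perm.comp ⟨(Equiv.swap i (i + 1)).bijective,
    fun _ ht => Equiv.swap_apply_of_ne_of_ne (by omega) (by omega)⟩
  vertex j hj := by
    rcases lt_trichotomy j (i + 1) with h | rfl | h
    · rw [C.vertex_swap_of_le (by omega)]
      exact hC.vertex j hj
    · rw [C.vertex_swap_succ]
      exact (hC.vertex i (by omega)).add_move (hC.perm.lt (by omega)) hpos
    · rw [C.vertex_swap_of_lt h]
      exact hC.vertex j hj

lemma IsDoor.rotate (hL : IsSpernerLabelling (d + 1) N L) (h : C.IsDoor (d + 1) N L 0) :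
    (C.rotate (d + 1)).IsDoor (d + 1) N L (d + 1) := by
  refine ⟨h.1.rotate (one_le_vertex_succ_perm_zero h.1 (h.exists_one_le_vertex hL (by omega))),
    le_rfl, fun k hk => ?_⟩
  obtain ⟨j, hj, hj0, hLj⟩ := h.2.2 k hk
  refine ⟨j - 1, by omega, by omega, ?_⟩
  rwa [C.vertex_rotate (by omega), Nat.sub_add_cancel (by omega)]

lemma IsDoor.unrotate (h : C.IsDoor (d + 1) N L (d + 1))
    (hnb : ¬(C.perm d = d ∧ C.base (d + 1) = 0)) : (C.unrotate (d + 1)).IsDoor (d + 1) N L 0 := by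
  refine ⟨h.1.unrotate (one_le_base_perm_succ h.1 hnb), by omega, fun k hk => ?_⟩
  obtain ⟨j, hj, hjd, hLj⟩ := h.2.2 k hk
  exact ⟨j + 1, by omega, by omega, by rwa [C.vertex_unrotate (by omega)]⟩

lemma IsDoor.swap (hL : IsSpernerLabelling (d + 1) N L) {i : ℕ} (hi : i < d)
    (h : C.IsDoor (d + 1) N L (i + 1)) : (C.swap i).IsDoor (d + 1) N L (i + 1) := by
  have hw := h.exists_one_le_vertex hL (h.1.perm.lt (show i + 1 < d + 1 by omega))
  refine ⟨h.1.swap hi (one_le_vertex_perm_succ h.1 hi hw), h.2.1, fun k hk => ?_⟩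
  obtain ⟨j, hj, hji, hLj⟩ := h.2.2 k hk
  refine ⟨j, hj, hji, ?_⟩
  rcases hji.lt_or_gt with h' | h'
  · rwa [C.vertex_swap_of_le (by omega)]
  · rwa [C.vertex_swap_of_lt h']

end Cell

/-- The facet of `p.1` opposite its vertex `p.2` lies in the face `v (d + 1) = 0` of the
`(d + 1)`-simplex. -/
def OnBoundary (d : ℕ) (p : Cell × ℕ) : Prop :=
  p.2 = d + 1 ∧ p.1.perm d = d ∧ p.1.base (d + 1) = 0

/-- The other cell of the triangulation of the `(d + 1)`-simplex sharing the facet of `p.1`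
opposite its vertex `p.2`, with the index of its vertex opposite that facet. -/
def pivot (d : ℕ) : Cell × ℕ → Cell × ℕ
  | (C, 0) => (C.rotate (d + 1), d + 1)
  | (C, i + 1) => if i = d then (C.unrotate (d + 1), 0) else (C.swap i, i + 1)

theorem pivot_spec (hL : IsSpernerLabelling (d + 1) N L)
    {p : Cell × ℕ} (hp : p.1.IsDoor (d + 1) N L p.2) (hb : ¬OnBoundary d p) :
    (pivot d p).1.IsDoor (d + 1) N L (pivot d p).2 ∧ ¬OnBoundary d (pivot d p) ∧
      pivot d (pivot d p) = p ∧ pivot d p ≠ p := by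
  obtain ⟨C, _ | i⟩ := p <;> dsimp only at hp hb
  · simp only [pivot, if_true, Cell.unrotate_rotate]
    refine ⟨hp.rotate hL, ?_, trivial, by simp⟩
    rintro ⟨-, hperm, hbase⟩
    simp only [Cell.rotate, Function.comp_apply, cycle_succ_apply_self] at hperm
    have := hp.1.base.nonneg (d + 1)
    simp only [Cell.rotate, Pi.add_apply, hperm, move_succ] at hbase
    omega
  by_cases hid : i = d
  · subst hid
    have hnb : ¬(C.perm i = i ∧ C.base (i + 1) = 0) := fun h => hb ⟨rfl, h⟩
    simp only [pivot, if_true, Cell.rotate_unrotate]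
    exact ⟨hp.unrotate hnb, by simp [OnBoundary], trivial, by simp⟩
  · have hi : i < d := by have := hp.2.1; omega
    simp only [pivot, if_neg hid, Cell.swap_swap]
    refine ⟨hp.swap hL hi, fun h => by simp [OnBoundary] at h; omega, trivial, fun h => ?_⟩
    have := congrArg (fun p : Cell × ℕ => p.1.perm i) h
    simp only [Cell.swap, Function.comp_apply, Equiv.swap_apply_left] at this
    have := hp.1.perm.injective this
    omega

lemma finite_setOf_isLatticePoint (d N : ℕ) : {v | IsLatticePoint d N v}.Finite := by
  refine Set.Finite.of_finite_image (f := fun v (k : Fin (d + 1)) => v k) ?_ fun v hv w hw h => ?_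
  · refine (Set.Finite.pi (t := fun _ => Set.Icc (0 : ℤ) N) fun _ => Set.finite_Icc _ _).subset ?_
    rintro _ ⟨v, hv, rfl⟩ k -
    exact ⟨hv.nonneg k, hv.sum_eq ▸ single_le_sum (fun j _ => hv.nonneg j) (mem_range.mpr k.2)⟩
  · funext k
    rcases lt_or_ge k (d + 1) with hk | hk
    · exact congrFun h ⟨k, hk⟩
    · rw [hv.eq_zero_of_lt k hk, hw.eq_zero_of_lt k hk]

lemma finite_setOf_isPermBelow (d : ℕ) : {σ | IsPermBelow d σ}.Finite := by
  refine Set.Finite.of_finite_image (f := fun σ (t : Fin d) => σ t) ?_ fun σ hσ τ hτ h => ?_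
  · refine (Set.Finite.pi (t := fun _ => Set.Iio d) fun _ => Set.finite_Iio _).subset ?_
    rintro _ ⟨σ, hσ, rfl⟩ t -
    exact hσ.lt t.2
  · funext t
    rcases lt_or_ge t d with ht | ht
    · exact congrFun h ⟨t, ht⟩
    · rw [hσ.eq_self t ht, hτ.eq_self t ht]

lemma finite_setOf_isValid (d N : ℕ) : {C : Cell | C.IsValid d N}.Finite :=
  (((finite_setOf_isLatticePoint d N).prod (finite_setOf_isPermBelow d)).image
    fun p => Cell.mk p.1 p.2).subset fun C hC => ⟨(C.base, C.perm), ⟨hC.base, hC.perm⟩, rfl⟩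

noncomputable def cells (d N : ℕ) : Finset Cell := (finite_setOf_isValid d N).toFinset

lemma mem_cells : C ∈ cells d N ↔ C.IsValid d N := Set.Finite.mem_toFinset _

lemma Cell.isDoor_iff (hC : C.IsValid d N) {i : ℕ} (hi : i ≤ d) :
    C.IsDoor d N L i ↔ range d ⊆ ((range (d + 1)).erase i).image (fun j => L (C.vertex j)) := by
  simp only [Cell.IsDoor, hC, hi, true_and, subset_iff, mem_range, mem_image, mem_erase]
  exact forall₂_congr fun _ _ => exists_congr fun _ => by omega

lemma Cell.isFull_iff (hC : C.IsValid d N) :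
    C.IsFull d N L ↔ range (d + 1) ⊆ (range (d + 1)).image (fun j => L (C.vertex j)) := by
  simp [Cell.IsFull, hC, subset_iff]

lemma IsLatticePoint.succ {v : ℕ → ℤ} (hv : IsLatticePoint d N v) : IsLatticePoint (d + 1) N v where
  nonneg := hv.nonneg
  eq_zero_of_lt k hk := hv.eq_zero_of_lt k (by omega)
  sum_eq := by rw [sum_range_succ, hv.eq_zero_of_lt _ (by omega), add_zero, hv.sum_eq]

lemma IsLatticePoint.of_succ {v : ℕ → ℤ} (hv : IsLatticePoint (d + 1) N v) (h : v (d + 1) = 0) :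
    IsLatticePoint d N v where
  nonneg := hv.nonneg
  eq_zero_of_lt k hk := by
    rcases eq_or_ne k (d + 1) with rfl | hk'
    · exact h
    · exact hv.eq_zero_of_lt k (by omega)
  sum_eq := by rw [← hv.sum_eq, sum_range_succ _ (d + 1), h, add_zero]

lemma IsSpernerLabelling.of_succ (hL : IsSpernerLabelling (d + 1) N L) :
    IsSpernerLabelling d N L := fun v hv => by
  obtain ⟨hle, hpos⟩ := hL v hv.succ
  refine ⟨?_, hpos⟩
  by_contra! h
  have := hv.eq_zero_of_lt (L v) h
  omega

lemma IsPermBelow.succ {σ : ℕ → ℕ} (h : IsPermBelow d σ) : IsPermBelow (d + 1) σ :=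
  ⟨h.bijective, fun t ht => h.eq_self t (by omega)⟩

lemma IsPermBelow.of_succ {σ : ℕ → ℕ} (h : IsPermBelow (d + 1) σ) (hd : σ d = d) :
    IsPermBelow d σ := by
  refine ⟨h.bijective, fun t ht => ?_⟩
  rcases ht.eq_or_lt with rfl | ht
  · exact hd
  · exact h.eq_self t ht

namespace Cell

lemma vertex_apply_succ (hσ : IsPermBelow (d + 1) C.perm) (hd : C.perm d = d) {j : ℕ}
    (hj : j ≤ d) : C.vertex j (d + 1) = C.base (d + 1) := by
  rw [C.vertex_apply hσ.injective,
    if_neg (show ¬∃ t < j, C.perm t + 1 = d + 1 by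
      rintro ⟨t, ht, h⟩; have := hσ.injective (show C.perm t = C.perm d by omega); omega),
    if_neg (show ¬∃ t < j, C.perm t = d + 1 by
      rintro ⟨t, ht, h⟩; have := hσ.lt (show t < d + 1 by omega); omega)]
  ring

lemma vertex_apply_self_le (hσ : IsPermBelow d C.perm) {j : ℕ} (hj : j ≤ d) :
    C.vertex j d ≤ C.vertex d d := by
  have hnot : ∀ j ≤ d, ¬∃ t < j, C.perm t = d := fun j hj ⟨t, ht, h⟩ => by
    have := hσ.lt (show t < d by omega); omega
  rw [C.vertex_apply hσ.injective, C.vertex_apply hσ.injective, if_neg (hnot j hj),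
    if_neg (hnot d le_rfl)]
  by_cases h : ∃ t < j, C.perm t + 1 = d
  · obtain ⟨t, ht, h⟩ := h
    rw [if_pos ⟨t, ht, h⟩, if_pos ⟨t, by omega, h⟩]
  · rw [if_neg h]
    split_ifs <;> omega

lemma IsValid.of_succ (hC : C.IsValid (d + 1) N) (hd : C.perm d = d) (hb : C.base (d + 1) = 0) :
    C.IsValid d N where
  perm := hC.perm.of_succ hd
  vertex j hj := (hC.vertex j (by omega)).of_succ ((C.vertex_apply_succ hC.perm hd hj).trans hb)

lemma IsValid.succ (hC : C.IsValid d N) (hpos : 1 ≤ C.vertex d d) : C.IsValid (d + 1) N where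
  perm := hC.perm.succ
  vertex j hj := by
    rcases hj.lt_or_eq with hj | rfl
    · exact (hC.vertex j (by omega)).succ
    · have hlast : C.vertex (d + 1) = C.vertex d + move d :=
        funext fun k => by rw [C.vertex_succ, hC.perm.eq_self d le_rfl]; rfl
      rw [hlast]
      exact (hC.vertex d le_rfl).succ.add_move (by omega) hpos

lemma IsFull.one_le_vertex_self (hL : IsSpernerLabelling d N L) (h : C.IsFull d N L) :
    1 ≤ C.vertex d d := by
  obtain ⟨j, hj, hLj⟩ := h.2 d le_rfl
  have := (hL _ (h.1.vertex j hj)).2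
  rw [hLj] at this
  exact this.trans (C.vertex_apply_self_le h.1.perm hj)

lemma IsDoor.isFull_of_onBoundary (h : C.IsDoor (d + 1) N L (d + 1)) (hd : C.perm d = d)
    (hb : C.base (d + 1) = 0) : C.IsFull d N L := by
  refine ⟨h.1.of_succ hd hb, fun k hk => ?_⟩
  obtain ⟨j, hj, hjd, hLj⟩ := h.2.2 k (by omega)
  exact ⟨j, by omega, hLj⟩

lemma IsFull.isDoor_succ (hL : IsSpernerLabelling d N L) (h : C.IsFull d N L) :
    C.IsDoor (d + 1) N L (d + 1) := by
  refine ⟨h.1.succ (h.one_le_vertex_self hL), le_rfl, fun k hk => ?_⟩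
  obtain ⟨j, hj, hLj⟩ := h.2 k (by omega)
  exact ⟨j, by omega, by omega, hLj⟩

end Cell

open scoped Classical

lemma Cell.card_doors_mod_two (hL : IsSpernerLabelling d N L) (hC : C.IsValid d N) :
    (#{i ∈ range (d + 1) | C.IsDoor d N L i} : ZMod 2) = if C.IsFull d N L then 1 else 0 := by
  have hdoors : ({i ∈ range (d + 1) | C.IsDoor d N L i} : Finset ℕ) =
      {i ∈ range (d + 1) | range d ⊆ ((range (d + 1)).erase i).image (fun j => L (C.vertex j))} :=
    filter_congr fun i hi => Cell.isDoor_iff hC (Nat.lt_succ_iff.mp (mem_range.mp hi))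
  have hs : #(range (d + 1)) = d + 1 := card_range _
  rw [hdoors, Cell.isFull_iff hC]
  split_ifs with hfull
  · rw [card_filter_range_subset_image_erase_eq_one hs hfull, Nat.cast_one]
  · refine (ZMod.natCast_eq_zero_iff_even).mpr
      (even_card_filter_range_subset_image_erase hs (fun j hj => ?_) hfull)
    exact (hL _ (hC.vertex j (Nat.lt_succ_iff.mp (mem_range.mp hj)))).1

noncomputable def doors (d N : ℕ) (L : (ℕ → ℤ) → ℕ) : Finset (Cell × ℕ) :=
  {p ∈ cells d N ×ˢ range (d + 1) | p.1.IsDoor d N L p.2}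

noncomputable def fullCells (d N : ℕ) (L : (ℕ → ℤ) → ℕ) : Finset Cell :=
  {C ∈ cells d N | C.IsFull d N L}

lemma mem_doors {p : Cell × ℕ} : p ∈ doors d N L ↔ p.1.IsDoor d N L p.2 := by
  simp only [doors, mem_filter, mem_product, mem_cells, mem_range, and_iff_right_iff_imp]
  exact fun h => ⟨h.1, Nat.lt_succ_of_le h.2.1⟩

lemma mem_fullCells : C ∈ fullCells d N L ↔ C.IsFull d N L := by
  simp only [fullCells, mem_filter, mem_cells, and_iff_right_iff_imp]
  exact fun h => h.1

lemma card_doors_mod_two (hL : IsSpernerLabelling d N L) :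
    (#(doors d N L) : ZMod 2) = #(fullCells d N L) := by
  rw [doors, card_filter, sum_product, Nat.cast_sum]
  simp only [← card_filter]
  rw [sum_congr rfl fun C hC => Cell.card_doors_mod_two hL (mem_cells.mp hC), sum_boole]
  rfl

lemma card_doors_not_onBoundary (hL : IsSpernerLabelling (d + 1) N L) :
    (#{p ∈ doors (d + 1) N L | ¬OnBoundary d p} : ZMod 2) = 0 := by
  have hpivot : ∀ p ∈ ({p ∈ doors (d + 1) N L | ¬OnBoundary d p} : Finset _),
      pivot d p ∈ ({p ∈ doors (d + 1) N L | ¬OnBoundary d p} : Finset _) ∧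
        pivot d (pivot d p) = p ∧ pivot d p ≠ p := fun p hp => by
    obtain ⟨hp, hb⟩ := mem_filter.mp hp
    obtain ⟨hdoor, hb', hinv, hne⟩ := pivot_spec hL (mem_doors.mp hp) hb
    exact ⟨mem_filter.mpr ⟨mem_doors.mpr hdoor, hb'⟩, hinv, hne⟩
  rw [card_eq_sum_ones, Nat.cast_sum]
  exact sum_involution (fun p _ => pivot d p) (fun _ _ => by decide)
    (fun p hp _ => (hpivot p hp).2.2) (fun p hp => (hpivot p hp).1) (fun p hp => (hpivot p hp).2.1)

lemma card_doors_onBoundary (hL : IsSpernerLabelling d N L) :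
    #{p ∈ doors (d + 1) N L | OnBoundary d p} = #(fullCells d N L) := by
  refine card_bij' (fun p _ => p.1) (fun C _ => (C, d + 1)) (fun p hp => ?_) (fun C hC => ?_)
    (fun p hp => ?_) (fun _ _ => rfl)
  · obtain ⟨hp, hi, hd, hb⟩ := mem_filter.mp hp
    have hp := mem_doors.mp hp
    rw [hi] at hp
    exact mem_fullCells.mpr (hp.isFull_of_onBoundary hd hb)
  · have hC := mem_fullCells.mp hC
    refine mem_filter.mpr ⟨mem_doors.mpr (hC.isDoor_succ hL), rfl, hC.1.perm.eq_self d le_rfl, ?_⟩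
    exact hC.1.base.eq_zero_of_lt (d + 1) (by omega)
  · exact Prod.ext rfl (mem_filter.mp hp).2.1.symm

lemma card_fullCells_zero (hL : IsSpernerLabelling 0 N L) : #(fullCells 0 N L) = 1 := by
  have hv₀ : IsLatticePoint 0 N (Pi.single 0 N) :=
    ⟨fun k => by rw [Pi.single_apply]; split_ifs <;> omega,
      fun k hk => Pi.single_eq_of_ne (by omega) _, by simp⟩
  let C₀ : Cell := ⟨Pi.single 0 N, id⟩
  have hC₀ : C₀.IsValid 0 N := ⟨⟨Function.bijective_id, fun _ _ => rfl⟩, fun j hj => by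
    obtain rfl : j = 0 := by omega
    rwa [Cell.vertex_zero]⟩
  have hfull : C₀.IsFull 0 N L := ⟨hC₀, fun k hk =>
    ⟨0, le_rfl, by have := (hL _ (hC₀.vertex 0 le_rfl)).1; omega⟩⟩
  refine card_eq_one.mpr ⟨C₀, eq_singleton_iff_unique_mem.mpr
    ⟨mem_fullCells.mpr hfull, fun C hC => ?_⟩⟩
  have hC := (mem_fullCells.mp hC).1
  ext1
  · funext k
    rcases eq_or_ne k 0 with rfl | hk
    · simpa [C₀] using hC.base.sum_eq
    · simp [C₀, hk, hC.base.eq_zero_of_lt k (by omega)]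
  · funext t
    exact hC.perm.eq_self t (Nat.zero_le t)

theorem card_fullCells_mod_two : ∀ {d : ℕ}, IsSpernerLabelling d N L →
    (#(fullCells d N L) : ZMod 2) = 1
  | 0, hL => by rw [card_fullCells_zero hL, Nat.cast_one]
  | d + 1, hL => by
    rw [← card_doors_mod_two hL, ← card_filter_add_card_filter_not (OnBoundary d), Nat.cast_add,
      card_doors_not_onBoundary hL, add_zero, card_doors_onBoundary hL.of_succ]
    exact card_fullCells_mod_two hL.of_succ

theorem exists_isFull (hL : IsSpernerLabelling d N L) : ∃ C : Cell, C.IsFull d N L := by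
  have hne : #(fullCells d N L) ≠ 0 := fun h => by
    simpa [h] using card_fullCells_mod_two hL
  obtain ⟨C, hC⟩ := card_pos.mp (Nat.pos_of_ne_zero hne)
  exact ⟨C, mem_fullCells.mp hC⟩

noncomputable def toSimplex (d N : ℕ) (v : ℕ → ℤ) : Fin (d + 1) → ℝ := fun k => v k / N

lemma IsLatticePoint.toSimplex_mem {v : ℕ → ℤ} (hv : IsLatticePoint d N v) (hN : N ≠ 0) :
    toSimplex d N v ∈ stdSimplex ℝ (Fin (d + 1)) := by
  refine ⟨fun k => div_nonneg (by exact_mod_cast hv.nonneg k) N.cast_nonneg, ?_⟩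
  simp only [toSimplex, ← sum_div]
  rw [Fin.sum_univ_eq_sum_range (fun k => (v k : ℝ)), ← Int.cast_sum, hv.sum_eq, Int.cast_natCast,
    div_self (Nat.cast_ne_zero.mpr hN)]

lemma dist_toSimplex_le {v w : ℕ → ℤ} (h : ∀ k, |v k - w k| ≤ 1) :
    dist (toSimplex d N v) (toSimplex d N w) ≤ 1 / N := by
  refine (dist_pi_le_iff (by positivity)).mpr fun k => ?_
  rw [Real.dist_eq, toSimplex, toSimplex, ← sub_div, abs_div, Nat.abs_cast]
  gcongr
  exact_mod_cast h k

end Sperner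

section

variable {d : ℕ} {f : (Fin (d + 1) → ℝ) → Fin (d + 1) → ℝ}

theorem exists_forall_le_add_of_mapsTo_stdSimplex (hf : ContinuousOn f (stdSimplex ℝ _))
    (hmaps : Set.MapsTo f (stdSimplex ℝ _) (stdSimplex ℝ _))
    (hface : ∀ x ∈ stdSimplex ℝ _, ∀ k, x k = 0 → f x k = 0) {y : Fin (d + 1) → ℝ}
    (hy : y ∈ stdSimplex ℝ _) {ε : ℝ} (hε : 0 < ε) :
    ∃ x ∈ stdSimplex ℝ _, ∀ k, y k ≤ f x k + ε := by
  obtain ⟨δ, hδ, hfδ⟩ := Metric.uniformContinuousOn_iff.mp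
    ((isCompact_stdSimplex ℝ _).uniformContinuousOn_of_continuous hf) ε hε
  obtain ⟨N, hN⟩ := exists_nat_gt (1 / δ)
  have hN₀ : N ≠ 0 := by rintro rfl; simp at hN; linarith
  have hNδ : 1 / (N : ℝ) < δ := by
    rw [one_div_lt (by positivity) hδ]
    exact hN
  have hlab : ∀ v, Sperner.IsLatticePoint d N v → ∃ k : Fin (d + 1),
      v k ≠ 0 ∧ y k ≤ f (Sperner.toSimplex d N v) k := fun v hv => by
    have hx := hv.toSimplex_mem hN₀
    simpa [Sperner.toSimplex, hN₀] using exists_ne_zero_and_le_of_mem_stdSimplex hx hy (hmaps hx)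
      fun k hk => hface _ hx k hk
  choose! lab hlab using hlab
  have hL : Sperner.IsSpernerLabelling d N fun v => lab v := fun v hv =>
    ⟨Nat.lt_succ_iff.mp (lab v).2, by
      have := hv.nonneg (lab v)
      have := (hlab v hv).1
      show 1 ≤ v (lab v)
      omega⟩
  obtain ⟨C, hC, hfull⟩ := Sperner.exists_isFull hL
  refine ⟨_, hC.base.toSimplex_mem hN₀, fun k => ?_⟩
  obtain ⟨j, hj, hjk⟩ := hfull k (Nat.lt_succ_iff.mp k.2)
  have hdist : dist (Sperner.toSimplex d N (C.vertex j)) (Sperner.toSimplex d N C.base) < δ :=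
    (Sperner.dist_toSimplex_le (C.abs_vertex_sub_base_le hC.perm.injective j)).trans_lt hNδ
  have hfk := (dist_le_pi_dist _ _ k).trans_lt
    (hfδ _ ((hC.vertex j hj).toSimplex_mem hN₀) _ (hC.base.toSimplex_mem hN₀) hdist)
  have hyk := (hlab _ (hC.vertex j hj)).2
  rw [Fin.ext hjk] at hyk
  rw [Real.dist_eq, abs_lt] at hfk
  linarith [hfk.2]

theorem surjOn_stdSimplex_of_apply_eq_zero {m : ℕ} {f : (Fin m → ℝ) → Fin m → ℝ}
    (hf : ContinuousOn f (stdSimplex ℝ _)) (hmaps : Set.MapsTo f (stdSimplex ℝ _) (stdSimplex ℝ _))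
    (hface : ∀ x ∈ stdSimplex ℝ _, ∀ k, x k = 0 → f x k = 0) :
    Set.SurjOn f (stdSimplex ℝ _) (stdSimplex ℝ _) := by
  intro y hy
  obtain _ | d := m
  · simpa using hy.2
  -- minimise the largest undershoot `y k - f x k` of `f x` below `y`
  let g : (Fin (d + 1) → ℝ) → ℝ := fun x => univ.sup' univ_nonempty fun k => y k - f x k
  have hg : ContinuousOn g (stdSimplex ℝ _) := ContinuousOn.finset_sup'_apply univ_nonempty
    fun k _ => continuousOn_const.sub ((continuous_apply k).comp_continuousOn hf)
  obtain ⟨x, hx, hmin⟩ := (isCompact_stdSimplex ℝ _).exists_isMinOn ⟨y, hy⟩ hg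
  have hgx : g x ≤ 0 := le_of_forall_pos_le_add fun ε hε => by
    obtain ⟨x', hx', hyx'⟩ := exists_forall_le_add_of_mapsTo_stdSimplex hf hmaps hface hy hε
    refine (hmin hx').trans (sup'_le _ _ fun k _ => ?_)
    linarith [hyx' k]
  refine ⟨x, hx, (eq_of_le_of_mem_stdSimplex hy (hmaps hx) fun k => ?_).symm⟩
  linarith [(sup'_le_iff _ _).mp hgx k (mem_univ k)]

end

section

variable {m l : ℕ} {P : (Fin l → Fin m) → Fin m → ℝ}

lemma supp_single_one (k : Fin m) : supp (Pi.single k (1 : ℝ)) = {k} := by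
  ext j
  by_cases hj : j = k <;> simp [supp, hj]

lemma OrthPreserving.apply_eq_zero {B : (Fin m → ℝ) → Fin m → ℝ} (hB : OrthPreserving m B)
    (hfix : ∀ i : Fin m, B (Pi.single i 1) = Pi.single i 1) {x : Fin m → ℝ}
    (hx : x ∈ stdSimplex ℝ (Fin m)) {k : Fin m} (hk : x k = 0) : B x k = 0 := by
  have h := hB x hx _ (single_mem_stdSimplex ℝ k)
    (by rw [supp_single_one, Set.inter_singleton_eq_empty]; simpa [supp] using hk)
  rw [hfix, supp_single_one, Set.inter_singleton_eq_empty] at h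
  simpa [supp] using h

lemma PSO_continuous (m l : ℕ) (P : (Fin l → Fin m) → Fin m → ℝ) : Continuous (PSO m l P) := by
  unfold PSO
  fun_prop

lemma sum_prod_eq_one_of_mem_stdSimplex {x : Fin m → ℝ} (hx : x ∈ stdSimplex ℝ (Fin m)) :
    ∑ i : Fin l → Fin m, ∏ s, x (i s) = 1 := by
  rw [← Fintype.prod_sum fun _ j => x j, hx.2, prod_const_one]

lemma PSO_mapsTo_stdSimplex (hP : ∀ i, P i ∈ stdSimplex ℝ (Fin m)) :
    Set.MapsTo (PSO m l P) (stdSimplex ℝ (Fin m)) (stdSimplex ℝ (Fin m)) := fun x hx => by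
  refine ⟨fun k => sum_nonneg fun i _ =>
    mul_nonneg (prod_nonneg fun s _ => hx.1 _) ((hP i).1 k), ?_⟩
  simp only [PSO]
  rw [sum_comm]
  simp only [← mul_sum, (hP _).2, mul_one]
  exact sum_prod_eq_one_of_mem_stdSimplex hx

end

theorem PSO_surjective_of_orthPreserving_general (m l : ℕ)
    (P : (Fin l → Fin m) → Fin m → ℝ)
    (hP : ∀ i, P i ∈ stdSimplex ℝ (Fin m))
    (hfix : ∀ i : Fin m, PSO m l P (Pi.single i 1) = Pi.single i 1)
    (hOP : OrthPreserving m (PSO m l P)) :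
    Set.SurjOn (PSO m l P) (stdSimplex ℝ (Fin m)) (stdSimplex ℝ (Fin m)) :=
  surjOn_stdSimplex_of_apply_eq_zero (PSO_continuous m l P).continuousOn (PSO_mapsTo_stdSimplex hP)
    fun _ hx _ hk => hOP.apply_eq_zero hfix hx hk

/-- If a PSO is orthogonal preserving and fixes every vertex of the simplex,
then it is surjective. -/
theorem PSO_surjective_of_orthPreserving (m l : ℕ)
    (P : (Fin l → Fin m) → Fin m → ℝ)
    (hP : ∀ i, P i ∈ stdSimplex ℝ (Fin m))
    (hsym : ∀ (i : Fin l → Fin m) (π : Equiv.Perm (Fin l)), P (i ∘ π) = P i)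
    (hfix : ∀ i : Fin m, PSO m l P (Pi.single i 1) = Pi.single i 1)
    (hOP : OrthPreserving m (PSO m l P)) :
    Set.SurjOn (PSO m l P) (stdSimplex ℝ (Fin m)) (stdSimplex ℝ (Fin m)) :=
  PSO_surjective_of_orthPreserving_general m l P hP hfix hOP
end

section
/- If a PSO 𝔅 is surjective and fixes every vertex, then the preimage of each vertex is exactly that vertex: 𝔅^{-1}(e_i) = {e_i} for every i ∈ I_m. -/
lemma PSO_single (m l : ℕ) (P : (Fin l → Fin m) → Fin m → ℝ) (j : Fin m) (k : Fin m) :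
    PSO m l P (Pi.single j 1) k = P (fun _ => j) k := by
  unfold PSO
  rw [Finset.sum_eq_single (fun _ => j)]
  · simp
  · intro b _ hb
    have hex : ∃ s, b s ≠ j := by
      by_contra h; push_neg at h; exact hb (funext h)
    obtain ⟨s, hs⟩ := hex
    have hz : ∏ t : Fin l, (Pi.single j (1:ℝ) : Fin m → ℝ) (b t) = 0 := by
      apply Finset.prod_eq_zero (Finset.mem_univ s)
      simp [Pi.single_eq_of_ne hs]
    rw [hz, zero_mul]
  · intro h; exact absurd (Finset.mem_univ _) h

/-- If a PSO is surjective and fixes every vertex, then the preimage of each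
vertex is exactly that vertex. -/
theorem preimage_vertex_of_surjective (m l : ℕ)
    (P : (Fin l → Fin m) → Fin m → ℝ)
    (hP : ∀ i, P i ∈ stdSimplex ℝ (Fin m))
    (hsym : ∀ (i : Fin l → Fin m) (π : Equiv.Perm (Fin l)), P (i ∘ π) = P i)
    (hfix : ∀ i : Fin m, PSO m l P (Pi.single i 1) = Pi.single i 1)
    (hsurj : Set.SurjOn (PSO m l P) (stdSimplex ℝ (Fin m)) (stdSimplex ℝ (Fin m))) :
    ∀ i : Fin m,
      {x ∈ stdSimplex ℝ (Fin m) | PSO m l P x = Pi.single i 1} =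
        {(Pi.single i 1 : Fin m → ℝ)} := by
  intro i
  have hPc : ∀ j : Fin m, P (fun _ => j) = Pi.single j 1 := by
    intro j
    funext k
    rw [← PSO_single m l P j k, hfix j]
  ext x
  simp only [Set.mem_setOf_eq, Set.mem_singleton_iff]
  constructor
  · rintro ⟨⟨hx0, hx1⟩, hx⟩
    -- show every coordinate j ≠ i vanishes
    have hjz : ∀ j : Fin m, j ≠ i → x j = 0 := by
      intro j hji
      rcases Nat.eq_zero_or_pos l with hl | hl
      · -- degenerate case: hfix is contradictory
        subst hl
        exfalso
        have heq : (Pi.single i (1:ℝ) : Fin m → ℝ) = Pi.single j 1 := by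
          rw [← hfix i, ← hfix j]
          funext k
          simp [PSO]
        have := congrFun heq i
        rw [Pi.single_eq_same, Pi.single_eq_of_ne (Ne.symm hji)] at this
        exact one_ne_zero this
      · have hj0 : (∑ c : Fin l → Fin m, (∏ s, x (c s)) * P c j) = 0 := by
          have hcf := congrFun hx j
          simpa [PSO, Pi.single_eq_of_ne hji] using hcf
        have hnn : ∀ c ∈ (Finset.univ : Finset (Fin l → Fin m)),
            0 ≤ (∏ s, x (c s)) * P c j := by
          intro c _
          exact mul_nonneg (Finset.prod_nonneg fun s _ => hx0 _) ((hP c).1 j)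
        have hterm := (Finset.sum_eq_zero_iff_of_nonneg hnn).mp hj0 (fun _ => j)
          (Finset.mem_univ _)
        have hPj : P (fun _ => j) j = 1 := by rw [hPc j, Pi.single_eq_same]
        rw [hPj, mul_one, Finset.prod_const, Finset.card_univ, Fintype.card_fin] at hterm
        exact (pow_eq_zero_iff hl.ne').mp hterm
    -- hence x i = 1
    have hxi : x i = 1 := by
      have := hx1
      rw [Finset.sum_eq_single i (fun b _ hb => hjz b hb)
        (fun h => absurd (Finset.mem_univ _) h)] at this
      exact this
    funext k
    by_cases hk : k = i
    · subst hk; rw [hxi, Pi.single_eq_same]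
    · rw [hjz k hk, Pi.single_eq_of_ne hk]
  · rintro rfl
    refine ⟨⟨fun k => ?_, ?_⟩, hfix i⟩
    · rcases eq_or_ne k i with rfl | hk
      · simp
      · simp [Pi.single_eq_of_ne hk]
    · simp [Pi.single_apply, Finset.sum_ite_eq']
end

section
/- If a PSO 𝔅 is surjective and fixes every vertex, then for every k ∈ {2,…,l} and indices i_1,…,i_k, the preimage of the relative interior of the facet spanned by e_{i_1},…,e_{i_k} is exactly that relative interior: 𝔅^{-1}(int Γ_{e_{i_1}⋯e_{i_k}}) = int Γ_{e_{i_1}⋯e_{i_k}}. -/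
lemma pso_term_nonneg {m l : ℕ} {P : (Fin l → Fin m) → Fin m → ℝ}
    (hP : ∀ i, P i ∈ stdSimplex ℝ (Fin m)) {x : Fin m → ℝ}
    (hx : x ∈ stdSimplex ℝ (Fin m)) (i : Fin l → Fin m) (k : Fin m) :
    0 ≤ (∏ s, x (i s)) * P i k :=
  mul_nonneg (Finset.prod_nonneg fun s _ => hx.1 _) ((hP i).1 k)

lemma pso_mem {m l : ℕ} {P : (Fin l → Fin m) → Fin m → ℝ}
    (hP : ∀ i, P i ∈ stdSimplex ℝ (Fin m)) {x : Fin m → ℝ}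
    (hx : x ∈ stdSimplex ℝ (Fin m)) : PSO m l P x ∈ stdSimplex ℝ (Fin m) := by
  constructor
  · intro k
    exact Finset.sum_nonneg fun i _ => pso_term_nonneg hP hx i k
  · show (∑ k, ∑ i : Fin l → Fin m, (∏ s, x (i s)) * P i k) = 1
    rw [Finset.sum_comm]
    simp_rw [← Finset.mul_sum, (hP _).2, mul_one]
    have := Finset.prod_univ_sum (fun _ : Fin l => (Finset.univ : Finset (Fin m)))
      (fun _ j => x j)
    rw [Fintype.piFinset_univ] at this
    rw [← this]
    simp [hx.2]

lemma P_const {m l : ℕ} {P : (Fin l → Fin m) → Fin m → ℝ}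
    (hfix : ∀ i : Fin m, PSO m l P (Pi.single i 1) = Pi.single i 1) (j : Fin m) :
    P (fun _ => j) = Pi.single j 1 := by
  funext k
  have h := congrFun (hfix j) k
  simp only [PSO] at h
  rw [Finset.sum_eq_single (fun _ => j)] at h
  · simpa using h
  · intro i _ hne
    obtain ⟨s, hs⟩ : ∃ s, i s ≠ j := by
      by_contra hc; push_neg at hc; exact hne (funext hc)
    rw [mul_eq_zero]
    exact Or.inl (Finset.prod_eq_zero (Finset.mem_univ s) (Pi.single_eq_of_ne hs 1))
  · simp

lemma supp_subset_pso {m l : ℕ} {P : (Fin l → Fin m) → Fin m → ℝ}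
    (hP : ∀ i, P i ∈ stdSimplex ℝ (Fin m))
    (hfix : ∀ i : Fin m, PSO m l P (Pi.single i 1) = Pi.single i 1)
    {x : Fin m → ℝ} (hx : x ∈ stdSimplex ℝ (Fin m)) :
    supp x ⊆ supp (PSO m l P x) := by
  intro j hj
  have hxj : 0 < x j := lt_of_le_of_ne (hx.1 j) (Ne.symm hj)
  have hle : (∏ s : Fin l, x ((fun _ => j) s)) * P (fun _ => j) j ≤ PSO m l P x j :=
    Finset.single_le_sum (fun i _ => pso_term_nonneg hP hx i j) (Finset.mem_univ _)
  have hpos : 0 < (∏ s : Fin l, x ((fun _ => j) s)) * P (fun _ => j) j := by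
    rw [P_const hfix, Pi.single_eq_same]
    simpa using pow_pos hxj l
  exact ne_of_gt (lt_of_lt_of_le hpos hle)

lemma supp_pso_eq {m l : ℕ} {P : (Fin l → Fin m) → Fin m → ℝ}
    (hP : ∀ i, P i ∈ stdSimplex ℝ (Fin m))
    (hfix : ∀ i : Fin m, PSO m l P (Pi.single i 1) = Pi.single i 1)
    (hsurj : Set.SurjOn (PSO m l P) (stdSimplex ℝ (Fin m)) (stdSimplex ℝ (Fin m))) :
    ∀ x ∈ stdSimplex ℝ (Fin m), supp (PSO m l P x) = supp x := by
  suffices H : ∀ n : ℕ, ∀ x ∈ stdSimplex ℝ (Fin m),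
      (Finset.univ.filter fun j => x j ≠ 0).card = n →
      supp (PSO m l P x) ⊆ supp x by
    intro x hx
    exact Set.Subset.antisymm (H _ x hx rfl) (supp_subset_pso hP hfix hx)
  intro n
  induction n using Nat.strong_induction_on with
  | _ n IH =>
    intro x hx hcard k0 hk0
    by_contra hk0x
    have hxk0 : x k0 = 0 := not_not.mp hk0x
    have hk0' : (∑ i : Fin l → Fin m, (∏ s, x (i s)) * P i k0) ≠ 0 := hk0
    obtain ⟨i0, -, hi0⟩ := Finset.exists_ne_zero_of_sum_ne_zero hk0'
    rw [mul_ne_zero_iff] at hi0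
    have hxi0 : ∀ s, x (i0 s) ≠ 0 := by
      intro s
      exact Finset.prod_ne_zero_iff.mp hi0.1 s (Finset.mem_univ s)
    obtain ⟨y, hy, hBy⟩ := hsurj hx
    have hysub : supp y ⊆ supp x := by
      have := supp_subset_pso hP hfix hy
      rwa [hBy] at this
    by_cases hcase : ∀ j, x j ≠ 0 → y j ≠ 0
    · -- supp x ⊆ supp y; then PSO y k0 > 0 but PSO y k0 = x k0 = 0
      have hyi0 : ∀ s, 0 < y (i0 s) := fun s =>
        lt_of_le_of_ne (hy.1 _) (Ne.symm (hcase _ (hxi0 s)))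
      have hpos : 0 < (∏ s, y (i0 s)) * P i0 k0 :=
        mul_pos (Finset.prod_pos fun s _ => hyi0 s)
          (lt_of_le_of_ne ((hP i0).1 k0) (Ne.symm hi0.2))
      have hle : (∏ s, y (i0 s)) * P i0 k0 ≤ PSO m l P y k0 :=
        Finset.single_le_sum (fun i _ => pso_term_nonneg hP hy i k0) (Finset.mem_univ _)
      have : PSO m l P y k0 = 0 := by rw [hBy]; exact hxk0
      linarith
    · push_neg at hcase
      obtain ⟨j, hjx, hjy⟩ := hcase
      have hss : (Finset.univ.filter fun j => y j ≠ 0)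
          ⊂ (Finset.univ.filter fun j => x j ≠ 0) := by
        constructor
        · intro a ha
          simp only [Finset.mem_filter, Finset.mem_univ, true_and] at ha ⊢
          exact hysub ha
        · intro hsub
          have := hsub (by simp [hjx] : j ∈ Finset.univ.filter fun j => x j ≠ 0)
          simp only [Finset.mem_filter] at this
          exact this.2 hjy
      have hlt : (Finset.univ.filter fun j => y j ≠ 0).card < n := by
        rw [← hcard]; exact Finset.card_lt_card hss
      have hIH := IH _ hlt y hy rfl
      rw [hBy] at hIH
      exact (hIH hjx) hjy

/-- If a PSO of order `l` is surjective and fixes every vertex, then for every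
`k ∈ {2,…,l}` the preimage of the relative interior of any facet spanned by `k`
vertices is exactly that relative interior. -/
theorem preimage_facet_of_surjective (m l : ℕ)
    (P : (Fin l → Fin m) → Fin m → ℝ)
    (hP : ∀ i, P i ∈ stdSimplex ℝ (Fin m))
    (hsym : ∀ (i : Fin l → Fin m) (π : Equiv.Perm (Fin l)), P (i ∘ π) = P i)
    (hfix : ∀ i : Fin m, PSO m l P (Pi.single i 1) = Pi.single i 1)
    (hsurj : Set.SurjOn (PSO m l P) (stdSimplex ℝ (Fin m)) (stdSimplex ℝ (Fin m))) :
    ∀ J : Finset (Fin m), 2 ≤ J.card → J.card ≤ l →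
      {x ∈ stdSimplex ℝ (Fin m) | PSO m l P x ∈ intGamma m ↑J} = intGamma m ↑J := by
  intro J _ _
  ext x
  simp only [Set.mem_setOf_eq, intGamma]
  constructor
  · rintro ⟨hx, -, hsupp⟩
    exact ⟨hx, by rw [← supp_pso_eq hP hfix hsurj x hx]; exact hsupp⟩
  · rintro ⟨hx, hsupp⟩
    exact ⟨hx, pso_mem hP hx, by rw [supp_pso_eq hP hfix hsurj x hx]; exact hsupp⟩
end

section
/- Every PSO of order l−1 arises as a PSO of order l: given an (l−1)-order stochastic hypermatrix P, the l-order hypermatrix defined by symmetrized averaging, P̃_{i_1…i_l,k} = (1/(l−1)) Σ_{s=1}^{l−1} P_{i_1…î_s…i_l,k} (omitting one index), is stochastic and its associated PSO agrees with the PSO of P on S^{m-1}. -/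
lemma PSO_inner_sum (m r : ℕ) (P : (Fin r → Fin m) → Fin m → ℝ)
    (x : Fin m → ℝ) (hx : ∑ a, x a = 1) (p : Fin (r + 1)) (k : Fin m) :
    ∑ i : Fin (r + 1) → Fin m, (∏ s, x (i s)) * P (i ∘ p.succAbove) k
      = PSO m r P x k := by
  rw [← (Fin.insertNthEquiv (fun _ => Fin m) p).sum_comp
    (fun i => (∏ s, x (i s)) * P (i ∘ p.succAbove) k)]
  rw [Fintype.sum_prod_type]
  have : ∀ (a : Fin m) (j : Fin r → Fin m),
      (∏ s, x ((Fin.insertNthEquiv (fun _ => Fin m) p) (a, j) s)) *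
        P ((Fin.insertNthEquiv (fun _ => Fin m) p) (a, j) ∘ p.succAbove) k
      = x a * ((∏ s, x (j s)) * P j k) := by
    intro a j
    have h1 : (Fin.insertNthEquiv (fun _ => Fin m) p) (a, j) ∘ p.succAbove = j := by
      funext u; simp [Fin.insertNthEquiv]
    have h2 : ∏ s, x ((Fin.insertNthEquiv (fun _ => Fin m) p) (a, j) s)
        = x a * ∏ s : Fin r, x (j s) := by
      rw [Fin.prod_univ_succAbove _ p]
      simp [Fin.insertNthEquiv]
    rw [h1, h2]; ring
  simp only [this, ← Finset.mul_sum, ← Finset.sum_mul, hx, one_mul]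
  rfl

/-- Every PSO of order `l-1` arises as a PSO of order `l`: the `l`-order
hypermatrix obtained by averaging over omitting one of the first `l-1` indices,
`P̃_{i₁…i_l,k} = (1/(l-1)) Σ_{s=1}^{l-1} P_{i₁…îₛ…i_l,k}`, is stochastic and its
PSO agrees with that of `P` on the simplex. -/
theorem PSO_order_raising (m r : ℕ) (hr : 1 ≤ r)
    (P : (Fin r → Fin m) → Fin m → ℝ)
    (hP : ∀ i, P i ∈ stdSimplex ℝ (Fin m))
    (Q : (Fin (r + 1) → Fin m) → Fin m → ℝ)
    (hQ : ∀ (i : Fin (r + 1) → Fin m) (k : Fin m),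
      Q i k = (r : ℝ)⁻¹ * ∑ t : Fin r, P (i ∘ (Fin.castSucc t).succAbove) k) :
    (∀ i, Q i ∈ stdSimplex ℝ (Fin m)) ∧
      ∀ x ∈ stdSimplex ℝ (Fin m), PSO m (r + 1) Q x = PSO m r P x := by
  have hr0 : (r : ℝ) ≠ 0 := by
    exact_mod_cast Nat.one_le_iff_ne_zero.mp hr
  constructor
  · intro i
    constructor
    · intro k
      rw [hQ]
      exact mul_nonneg (by positivity)
        (Finset.sum_nonneg fun t _ => (hP _).1 k)
    · rw [Finset.sum_congr rfl (fun k _ => hQ i k)]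
      rw [← Finset.mul_sum, Finset.sum_comm]
      have : ∀ t : Fin r, ∑ k, P (i ∘ (Fin.castSucc t).succAbove) k = 1 :=
        fun t => (hP _).2
      simp [this, hr0]
  · intro x hx
    funext k
    show (∑ i : Fin (r + 1) → Fin m, (∏ s, x (i s)) * Q i k) = PSO m r P x k
    calc (∑ i : Fin (r + 1) → Fin m, (∏ s, x (i s)) * Q i k)
        = ∑ i : Fin (r + 1) → Fin m, ∑ t : Fin r,
            (r : ℝ)⁻¹ * ((∏ s, x (i s)) * P (i ∘ (Fin.castSucc t).succAbove) k) := by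
          refine Finset.sum_congr rfl fun i _ => ?_
          rw [hQ, Finset.mul_sum, Finset.mul_sum]
          exact Finset.sum_congr rfl fun t _ => by ring
      _ = ∑ t : Fin r, ∑ i : Fin (r + 1) → Fin m,
            (r : ℝ)⁻¹ * ((∏ s, x (i s)) * P (i ∘ (Fin.castSucc t).succAbove) k) :=
          Finset.sum_comm
      _ = (r : ℝ)⁻¹ * ∑ t : Fin r, ∑ i : Fin (r + 1) → Fin m,
            (∏ s, x (i s)) * P (i ∘ (Fin.castSucc t).succAbove) k := by
          simp only [← Finset.mul_sum]
      _ = (r : ℝ)⁻¹ * ∑ t : Fin r, PSO m r P x k := by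
          rw [Finset.sum_congr rfl
            (fun t _ => PSO_inner_sum m r P x hx.2 (Fin.castSucc t) k)]
      _ = PSO m r P x k := by
          simp [hr0]
end
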